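/- Let $S, T \subseteq [U]$ with $|S| = k$, $|T| = m$. In $\mathbb{R}^{U+2}$, define the points $w = (1,1,0,\ldots,0)$, $x_1 = (1,-1,0,\ldots,0)$, $x_2 = (-1,1,0,\ldots,0)$, $s = 0$, $y_1 = (1,0,\ldots,0)$, $y_2 = (0,1,0,\ldots,0)$, $\tilde{a}_i = (1,1,e_i)$, $\tilde{b}_i = (0,0,e_i)$ where $e_i \in \mathbb{R}^U$ is the $i$-th standard basis vector. For $S = \{s_1, \ldots, s_k\}$ and $T = \{t_1, \ldots, t_m\}$, define the point sequences $P = w, x_1, s, \tilde{b}_{t_1}, s, \tilde{b}_{t_2}, \ldots, s, \tilde{b}_{t_m}, s, x_2, w$ and $Q = y_1, \tilde{a}_{s_1}, y_2, y_1, \tilde{a}_{s_2}, y_2, \ldots, y_1, \tilde{a}_{s_k}, y_2$. If $S \cap T \ne \emptyset$ then $d_{dF}(P, Q) \le \sqrt{2}$, and if $S \cap T = \emptyset$ then $d_{dF}(P, Q) \ge \sqrt{3}$. -/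

import Mathlib

open Set

/-- Continuous Fréchet distance between two curves parametrized on `[0,1]`. -/
noncomputable def frechetDist {E : Type*} [PseudoMetricSpace E] (f g : ℝ → E) : ℝ :=
  sInf { r : ℝ | ∃ φ ψ : ℝ → ℝ,
    ContinuousOn φ (Set.Icc 0 1) ∧ ContinuousOn ψ (Set.Icc 0 1) ∧
    MonotoneOn φ (Set.Icc 0 1) ∧ MonotoneOn ψ (Set.Icc 0 1) ∧
    φ 0 = 0 ∧ φ 1 = 1 ∧ ψ 0 = 0 ∧ ψ 1 = 1 ∧
    ∀ t ∈ Set.Icc (0:ℝ) 1, dist (f (φ t)) (g (ψ t)) ≤ r }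

/-- The directed line segment from `a` to `b` as a curve on `[0,1]`. -/
def seg {E : Type*} [AddCommGroup E] [Module ℝ E] (a b : E) : ℝ → E :=
  fun s => (1 - s) • a + s • b

/-- Polygonal curve with vertices `p 0, …, p n`, parametrized on `[0,1]`. -/
noncomputable def polyline {E : Type*} [AddCommGroup E] [Module ℝ E] {n : ℕ}
    (p : Fin (n + 1) → E) (s : ℝ) : E :=
  let u : ℝ := s * n
  let i : ℕ := min ⌊u⌋₊ (n - 1)
  (1 - (u - i)) • p ⟨min i n, Nat.lt_succ_of_le (Nat.min_le_right _ _)⟩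
    + (u - i) • p ⟨min (i + 1) n, Nat.lt_succ_of_le (Nat.min_le_right _ _)⟩

/-- Polygonal curve through the points of a list. -/
noncomputable def polylineL {E : Type*} [AddCommGroup E] [Module ℝ E] (l : List E) : ℝ → E :=
  polyline (n := l.length - 1) (fun i => l.getD i.val 0)

/-- `τ` restricted to `[0,1]` is the polygonal curve with vertices
`τ (t 0), …, τ (t m)` at parameters `0 = t 0 < ⋯ < t m = 1`. -/
def IsPolylineOn (τ : ℝ → ℝ) (m : ℕ) (t : ℕ → ℝ) : Prop :=
  t 0 = 0 ∧ t m = 1 ∧ (∀ i < m, t i < t (i + 1)) ∧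
  ∀ i < m, ∀ s, t i ≤ s → s ≤ t (i + 1) →
    τ s = τ (t i) + (s - t i) / (t (i + 1) - t i) * (τ (t (i + 1)) - τ (t i))

/-- `s` is the parameter of a vertex (local extremum) of the time series `τ`. -/
def VertexAt (τ : ℝ → ℝ) (s : ℝ) : Prop :=
  s ∈ Set.Icc (0:ℝ) 1 ∧
    (IsLocalMaxOn τ (Set.Icc 0 1) s ∨ IsLocalMinOn τ (Set.Icc 0 1) s)

/-- A `δ`-signature of `τ : [0,1] → ℝ`, given by parameters
`0 = t 0 < t 1 < ⋯ < t ℓ = 1` (so the signature has `ℓ + 1` vertices and `ℓ ≥ 1` edges);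
the signature curve itself is `polyline (fun i => τ (t i))`. -/
structure IsDeltaSignature (δ : ℝ) (τ : ℝ → ℝ) (ℓ : ℕ) (t : ℕ → ℝ) : Prop where
  one_le : 1 ≤ ℓ
  mono : ∀ i < ℓ, t i < t (i + 1)
  start : t 0 = 0
  finish : t ℓ = 1
  nondeg : ∀ i, 1 ≤ i → i < ℓ →
    τ (t i) ∉ Set.uIcc (τ (t (i - 1))) (τ (t (i + 1)))
  dir_up : ∀ i < ℓ, τ (t i) < τ (t (i + 1)) →
    ∀ a b, t i ≤ a → a ≤ b → b ≤ t (i + 1) → τ a - τ b ≤ 2 * δ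
  dir_down : ∀ i < ℓ, τ (t (i + 1)) < τ (t i) →
    ∀ a b, t i ≤ a → a ≤ b → b ≤ t (i + 1) → τ b - τ a ≤ 2 * δ
  minedge_int : ∀ i, 1 ≤ i → i ≤ ℓ - 2 → 2 * δ < |τ (t (i + 1)) - τ (t i)|
  minedge_bnd : ∀ i < ℓ, (i = 0 ∨ i = ℓ - 1) → δ < |τ (t (i + 1)) - τ (t i)|
  range_int : ∀ i, 1 ≤ i → i ≤ ℓ - 2 → ∀ s, t i ≤ s → s ≤ t (i + 1) →
    τ s ∈ Set.uIcc (τ (t i)) (τ (t (i + 1)))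
  range_first : 2 ≤ ℓ → ∀ s, t 0 ≤ s → s ≤ t 1 →
    τ s ∈ Set.uIcc (τ (t 0)) (τ (t 1)) ∪ Set.Icc (τ (t 0) - δ) (τ (t 0) + δ)
  range_last : 2 ≤ ℓ → ∀ s, t (ℓ - 1) ≤ s → s ≤ t ℓ →
    τ s ∈ Set.uIcc (τ (t (ℓ - 1))) (τ (t ℓ)) ∪ Set.Icc (τ (t ℓ) - δ) (τ (t ℓ) + δ)
  range_single : ℓ = 1 → ∀ s, (0:ℝ) ≤ s → s ≤ 1 →
    τ s ∈ Set.uIcc (τ (t 0)) (τ (t 1)) ∪ Set.Icc (τ (t 0) - δ) (τ (t 0) + δ)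
      ∪ Set.Icc (τ (t 1) - δ) (τ (t 1) + δ)

/-- One step of a traversal: each index advances by 0 or 1, at least one advances. -/
def TravStep (a b : ℕ × ℕ) : Prop :=
  a.1 ≤ b.1 ∧ b.1 ≤ a.1 + 1 ∧ a.2 ≤ b.2 ∧ b.2 ≤ a.2 + 1 ∧ a ≠ b

/-- A traversal of two point sequences of lengths `m` and `k` (0-based indices). -/
def IsTraversal (m k : ℕ) (T : List (ℕ × ℕ)) : Prop :=
  T.head? = some (0, 0) ∧ T.getLast? = some (m - 1, k - 1) ∧ List.Chain' TravStep T

/-- Discrete Fréchet distance between the point sequences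
`p 0, …, p (m-1)` and `q 0, …, q (k-1)`. -/
noncomputable def ddF {E : Type*} [PseudoMetricSpace E] (m k : ℕ) (p q : ℕ → E) : ℝ :=
  sInf { r : ℝ | ∃ T : List (ℕ × ℕ), IsTraversal m k T ∧
    ∀ ij ∈ T, dist (p ij.1) (q ij.2) ≤ r }

/-- The subsequence of local extrema (vertex sequence) of a list of values. -/
def vertexSeq {α : Type*} [LinearOrder α] : List α → List α
  | [] => []
  | [a] => [a]
  | [a, b] => [a, b]
  | a :: b :: c :: rest =>
    if (a ≤ b ∧ b ≤ c) ∨ (c ≤ b ∧ b ≤ a) then vertexSeq (a :: c :: rest)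
    else a :: vertexSeq (b :: c :: rest)
termination_by l => l.length

/-- A point of `ℝ^{U+2}` given by its coordinate function (on 0-based indices). -/
noncomputable def mkPt (U : ℕ) (f : ℕ → ℝ) : EuclideanSpace ℝ (Fin (U + 2)) :=
  (WithLp.equiv 2 (Fin (U + 2) → ℝ)).symm (fun j => f j.val)

noncomputable def wPt (U : ℕ) : EuclideanSpace ℝ (Fin (U + 2)) :=
  mkPt U (fun j => if j ≤ 1 then 1 else 0)
noncomputable def x1Pt (U : ℕ) : EuclideanSpace ℝ (Fin (U + 2)) :=
  mkPt U (fun j => if j = 0 then 1 else if j = 1 then -1 else 0)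
noncomputable def x2Pt (U : ℕ) : EuclideanSpace ℝ (Fin (U + 2)) :=
  mkPt U (fun j => if j = 0 then -1 else if j = 1 then 1 else 0)
noncomputable def sPt (U : ℕ) : EuclideanSpace ℝ (Fin (U + 2)) :=
  mkPt U (fun _ => 0)
noncomputable def y1Pt (U : ℕ) : EuclideanSpace ℝ (Fin (U + 2)) :=
  mkPt U (fun j => if j = 0 then 1 else 0)
noncomputable def y2Pt (U : ℕ) : EuclideanSpace ℝ (Fin (U + 2)) :=
  mkPt U (fun j => if j = 1 then 1 else 0)
/-- `ã_i = (1,1,e_i)` for `i ∈ [U]` (the coordinate of `e_i` is 0-based index `i + 1`). -/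
noncomputable def aPt (U i : ℕ) : EuclideanSpace ℝ (Fin (U + 2)) :=
  mkPt U (fun j => if j ≤ 1 then 1 else if j = i + 1 then 1 else 0)
/-- `b̃_i = (0,0,e_i)`. -/
noncomputable def bPt (U i : ℕ) : EuclideanSpace ℝ (Fin (U + 2)) :=
  mkPt U (fun j => if j = i + 1 ∧ 2 ≤ j then 1 else 0)

/-- Bob's sequence `P = w, x₁, s, b̃_{t 0}, s, b̃_{t 1}, …, s, b̃_{t (m-1)}, s, x₂, w`
(of length `2m + 5`, 0-based indices). -/
noncomputable def Pseq (U m : ℕ) (t : ℕ → ℕ) : ℕ → EuclideanSpace ℝ (Fin (U + 2)) :=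
  fun i =>
    if i = 0 then wPt U
    else if i = 1 then x1Pt U
    else if i = 2 * m + 2 then sPt U
    else if i = 2 * m + 3 then x2Pt U
    else if i = 2 * m + 4 then wPt U
    else if i % 2 = 0 then sPt U
    else bPt U (t ((i - 3) / 2))

/-- Alice's sequence `Q = y₁, ã_{s 0}, y₂, y₁, ã_{s 1}, y₂, …` (of length `3k`). -/
noncomputable def Qseq (U k : ℕ) (s : ℕ → ℕ) : ℕ → EuclideanSpace ℝ (Fin (U + 2)) :=
  fun i =>
    if i % 3 = 0 then y1Pt U
    else if i % 3 = 1 then aPt U (s (i / 3))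
    else y2Pt U

/-!
Upper bound: if `s i = t j`, let `Q` wait at `y₁` (within `√2` of `x₁`, `s` and every `b̃`)
while `P` walks to `b̃_{t j}`, step diagonally onto `ã_{s i}` (at distance `√2`), and let `Q` wait
at `y₂` while `P` walks on to `x₂`; the two copies of `w` are at distance `1` from every point
of `Q` and absorb the remaining points of `Q`.

Lower bound: below `√3`, `x₁` can only be coupled with a copy of `y₁` and `x₂` only with a copy of
`y₂`. Between these two moments `Q` passes some `ã_{s i}` while `P` is at `x₁`, `x₂`, `s` or some
`b̃_{t j}`, and if `S ∩ T = ∅` all of these are at distance at least `√3` from `ã_{s i}`.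
-/

open Finset

section Frechet

variable {E : Type*} [PseudoMetricSpace E] {m k : ℕ} {p q : ℕ → E} {T : List (ℕ × ℕ)}

lemma ddF_le_of_isTraversal {r : ℝ} (hT : IsTraversal m k T)
    (h : ∀ ij ∈ T, dist (p ij.1) (q ij.2) ≤ r) : ddF m k p q ≤ r :=
  csInf_le ⟨0, fun _ ⟨_, hT', h'⟩ => dist_nonneg.trans (h' _ (List.mem_of_mem_head? hT'.1))⟩
    ⟨T, hT, h⟩

lemma le_ddF_of_forall_isTraversal {c : ℝ} (hT : IsTraversal m k T)
    (h : ∀ T, IsTraversal m k T → ∃ ij ∈ T, c ≤ dist (p ij.1) (q ij.2)) : c ≤ ddF m k p q := by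
  refine le_csInf ⟨(T.map fun ij => dist (p ij.1) (q ij.2)).sum, T, hT, fun ij hij =>
    List.single_le_sum (List.forall_mem_map.2 fun _ _ => dist_nonneg) _
      (List.mem_map_of_mem hij)⟩ ?_
  rintro r ⟨T', hT', hr⟩
  obtain ⟨ij, hij, hc⟩ := h T' hT'
  exact hc.trans (hr ij hij)

end Frechet

section Chain

variable {α : Type*} [PartialOrder α] {R : α → α → Prop} {T : List α}

lemma le_total_of_mem_of_isChain (hR : ∀ a b, R a b → a ≤ b) (hT : T.IsChain R) {a b : α}
    (ha : a ∈ T) (hb : b ∈ T) : a ≤ b ∨ b ≤ a := by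
  have : Std.Symm fun a b : α => a ≤ b ∨ b ≤ a := ⟨fun _ _ => Or.symm⟩
  have hle : T.Pairwise fun a b => a ≤ b ∨ b ≤ a := (hT.imp hR).pairwise.imp Or.inl
  rcases eq_or_ne a b with rfl | hab
  · exact Or.inl le_rfl
  · exact hle.forall ha hb hab

variable {f : α → ℕ}

lemma exists_mem_Icc_apply_eq_of_isChain_cons (hR : ∀ a b, R a b → a ≤ b ∧ f b ≤ f a + 1)
    {x : α} {l : List α} (hT : (x :: l).IsChain R) {b : α} (hb : b ∈ x :: l) {v : ℕ}
    (hxv : f x ≤ v) (hvb : v ≤ f b) : ∃ c ∈ x :: l, c ∈ Set.Icc x b ∧ f c = v := by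
  induction l generalizing x with
  | nil =>
    rw [List.mem_singleton.1 hb] at hvb ⊢
    exact ⟨x, List.mem_singleton_self x, ⟨le_rfl, le_rfl⟩, le_antisymm hxv hvb⟩
  | cons y l ih =>
    obtain ⟨hxy, hyl⟩ := List.isChain_cons_cons.1 hT
    rcases eq_or_lt_of_le hxv with hxv | hxv
    · have hxb : x ≤ b := by
        rcases List.mem_cons.1 hb with rfl | hb
        · exact le_rfl
        · exact List.pairwise_cons.1 (hT.imp fun a b h => (hR a b h).1).pairwise |>.1 b hb
      exact ⟨x, List.mem_cons_self, ⟨le_rfl, hxb⟩, hxv⟩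
    · have hb' : b ∈ y :: l := (List.mem_cons.1 hb).resolve_left (by rintro rfl; omega)
      obtain ⟨c, hc, ⟨hyc, hcb⟩, hcv⟩ := ih hyl hb' (by have := (hR x y hxy).2; omega)
      exact ⟨c, List.mem_cons_of_mem x hc, ⟨(hR x y hxy).1.trans hyc, hcb⟩, hcv⟩

lemma exists_mem_Icc_apply_eq_of_isChain (hR : ∀ a b, R a b → a ≤ b ∧ f b ≤ f a + 1)
    (hT : T.IsChain R) {a b : α} (ha : a ∈ T) (hb : b ∈ T) (hab : a ≤ b) {v : ℕ}
    (hav : f a ≤ v) (hvb : v ≤ f b) : ∃ c ∈ T, c ∈ Set.Icc a b ∧ f c = v := by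
  obtain ⟨l₁, l₂, rfl⟩ := List.append_of_mem ha
  rcases List.mem_append.1 hb with hb | hb
  · have hba : b ≤ a := List.pairwise_append.1 ((hT.imp fun a b h => (hR a b h).1).pairwise)
      |>.2.2 b hb a List.mem_cons_self
    obtain rfl := le_antisymm hab hba
    exact ⟨a, ha, ⟨le_rfl, le_rfl⟩, le_antisymm hav hvb⟩
  · obtain ⟨c, hc, hcab, hcv⟩ :=
      exists_mem_Icc_apply_eq_of_isChain_cons hR hT.right_of_append hb hav hvb
    exact ⟨c, List.mem_append_right l₁ hc, hcab, hcv⟩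

end Chain

lemma TravStep.le {a b : ℕ × ℕ} (h : TravStep a b) : a ≤ b :=
  Prod.le_def.2 ⟨h.1, h.2.2.1⟩

lemma IsTraversal.exists_mem_fst_eq {M K : ℕ} {T : List (ℕ × ℕ)} (hT : IsTraversal M K T)
    {p : ℕ} (hp : p < M) : ∃ q ≤ K - 1, (p, q) ∈ T := by
  obtain ⟨⟨p', q⟩, h, ⟨-, hle⟩, rfl : p' = p⟩ :=
    exists_mem_Icc_apply_eq_of_isChain (f := Prod.fst) (fun _ _ h => ⟨h.le, h.2.1⟩) hT.2.2
      (List.mem_of_mem_head? hT.1) (List.mem_of_mem_getLast? hT.2.1) (by simp) (v := p)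
      (by simp) (by simp; omega)
  exact ⟨q, (Prod.mk_le_mk.1 hle).2, h⟩

lemma dist_mkPt (U : ℕ) (f g : ℕ → ℝ) :
    dist (mkPt U f) (mkPt U g) = √(∑ j ∈ range (U + 2), (f j - g j) ^ 2) := by
  rw [EuclideanSpace.dist_eq, ← Fin.sum_univ_eq_sum_range (fun j => (f j - g j) ^ 2)]
  simp [mkPt, Real.dist_eq, sq_abs]

/-- The point `(x, y, c • e_u)` when `1 ≤ u ≤ U`; for `u = 0` the entry `c` would be shadowed
by `y`. -/
noncomputable def gadgetPt (U u : ℕ) (x y c : ℝ) : EuclideanSpace ℝ (Fin (U + 2)) :=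
  mkPt U (fun j => if j = 0 then x else if j = 1 then y else if j = u + 1 then c else 0)

section gadgetPt

variable {U u v : ℕ} {x y c x' y' c' : ℝ}

lemma dist_gadgetPt_gadgetPt (hu : 1 ≤ u) (huU : u ≤ U) :
    dist (gadgetPt U u x y c) (gadgetPt U u x' y' c') =
      √((x - x') ^ 2 + (y - y') ^ 2 + (c - c') ^ 2) := by
  rw [gadgetPt, gadgetPt, dist_mkPt]
  congr 1
  have hspikes : ∀ j, ((if j = 0 then x else if j = 1 then y else if j = u + 1 then c else 0) -
      (if j = 0 then x' else if j = 1 then y' else if j = u + 1 then c' else 0)) ^ 2 =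
      (if j = 0 then (x - x') ^ 2 else 0) + (if j = 1 then (y - y') ^ 2 else 0) +
        (if j = u + 1 then (c - c') ^ 2 else 0) := by
    intro j; split_ifs <;> first | omega | ring
  rw [sum_congr rfl fun j _ => hspikes j]
  simp [sum_add_distrib, huU]

lemma dist_gadgetPt_zero_gadgetPt_zero (u v : ℕ) :
    dist (gadgetPt U u x y 0) (gadgetPt U v x' y' 0) = √((x - x') ^ 2 + (y - y') ^ 2) := by
  rw [gadgetPt, gadgetPt, dist_mkPt]
  congr 1
  have hspikes : ∀ j, ((if j = 0 then x else if j = 1 then y else if j = u + 1 then 0 else 0) -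
      (if j = 0 then x' else if j = 1 then y' else if j = v + 1 then 0 else 0)) ^ 2 =
      (if j = 0 then (x - x') ^ 2 else 0) + (if j = 1 then (y - y') ^ 2 else 0) := by
    intro j; split_ifs <;> first | omega | ring
  rw [sum_congr rfl fun j _ => hspikes j]
  simp [sum_add_distrib]

lemma dist_gadgetPt_gadgetPt_of_ne (hu : 1 ≤ u) (huU : u ≤ U) (hv : 1 ≤ v) (hvU : v ≤ U)
    (huv : u ≠ v) :
    dist (gadgetPt U u x y c) (gadgetPt U v x' y' c') =
      √((x - x') ^ 2 + (y - y') ^ 2 + c ^ 2 + c' ^ 2) := by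
  rw [gadgetPt, gadgetPt, dist_mkPt]
  congr 1
  have hspikes : ∀ j, ((if j = 0 then x else if j = 1 then y else if j = u + 1 then c else 0) -
      (if j = 0 then x' else if j = 1 then y' else if j = v + 1 then c' else 0)) ^ 2 =
      (if j = 0 then (x - x') ^ 2 else 0) + (if j = 1 then (y - y') ^ 2 else 0) +
        (if j = u + 1 then c ^ 2 else 0) + (if j = v + 1 then c' ^ 2 else 0) := by
    intro j; split_ifs <;> first | omega | ring
  rw [sum_congr rfl fun j _ => hspikes j]
  simp [sum_add_distrib, huU, hvU]

end gadgetPt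

section

variable (U u v : ℕ)

lemma wPt_eq_gadgetPt : wPt U = gadgetPt U u 1 1 0 := by
  unfold wPt gadgetPt; congr; grind

lemma x1Pt_eq_gadgetPt : x1Pt U = gadgetPt U u 1 (-1) 0 := by
  unfold x1Pt gadgetPt; congr; grind

lemma x2Pt_eq_gadgetPt : x2Pt U = gadgetPt U u (-1) 1 0 := by
  unfold x2Pt gadgetPt; congr; grind

lemma sPt_eq_gadgetPt : sPt U = gadgetPt U u 0 0 0 := by
  unfold sPt gadgetPt; congr; grind

lemma y1Pt_eq_gadgetPt : y1Pt U = gadgetPt U u 1 0 0 := by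
  unfold y1Pt gadgetPt; congr; grind

lemma y2Pt_eq_gadgetPt : y2Pt U = gadgetPt U u 0 1 0 := by
  unfold y2Pt gadgetPt; congr; grind

lemma aPt_eq_gadgetPt : aPt U v = gadgetPt U v 1 1 1 := by
  unfold aPt gadgetPt; congr; grind

lemma bPt_eq_gadgetPt : bPt U u = gadgetPt U u 0 0 1 := by
  unfold bPt gadgetPt; congr; grind

end

lemma Pseq_cases (U : ℕ) (t : ℕ → ℕ) {m p : ℕ} (hp : p ≤ 2 * m + 4) :
    ((p = 0 ∨ p = 2 * m + 4) ∧ Pseq U m t p = wPt U) ∨ (p = 1 ∧ Pseq U m t p = x1Pt U) ∨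
      (p = 2 * m + 3 ∧ Pseq U m t p = x2Pt U) ∨ (p % 2 = 0 ∧ Pseq U m t p = sPt U) ∨
      ∃ j < m, p = 2 * j + 3 ∧ Pseq U m t p = bPt U (t j) := by
  unfold Pseq
  split_ifs <;> grind

lemma Qseq_cases (U k : ℕ) (s : ℕ → ℕ) (q : ℕ) :
    (q % 3 = 0 ∧ Qseq U k s q = y1Pt U) ∨ (q % 3 = 1 ∧ Qseq U k s q = aPt U (s (q / 3))) ∨
      (q % 3 = 2 ∧ Qseq U k s q = y2Pt U) := by
  unfold Qseq
  split_ifs <;> grind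

section Sequences

variable {U k m : ℕ} {s t : ℕ → ℕ}

lemma dist_wPt_Qseq (hs : ∀ i < k, 1 ≤ s i ∧ s i ≤ U) {q : ℕ} (hq : q < 3 * k) :
    dist (wPt U) (Qseq U k s q) = 1 := by
  obtain ⟨hs₁, hsU⟩ := hs (q / 3) (by omega)
  rw [wPt_eq_gadgetPt U (s (q / 3))]
  rcases Qseq_cases U k s q with ⟨-, hQ⟩ | ⟨-, hQ⟩ | ⟨-, hQ⟩
  all_goals
    simp only [hQ, y1Pt_eq_gadgetPt U (s (q / 3)), aPt_eq_gadgetPt, y2Pt_eq_gadgetPt U (s (q / 3)),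
      dist_gadgetPt_gadgetPt hs₁ hsU]
    norm_num

lemma dist_Pseq_y1Pt_le (ht : ∀ j < m, 1 ≤ t j ∧ t j ≤ U) {p : ℕ} (hp₁ : 1 ≤ p)
    (hp₂ : p ≤ 2 * m + 2) : dist (Pseq U m t p) (y1Pt U) ≤ √2 := by
  rcases Pseq_cases U t (by omega : p ≤ 2 * m + 4) with
    ⟨_, -⟩ | ⟨-, hP⟩ | ⟨_, -⟩ | ⟨-, hP⟩ | ⟨j, hj, -, hP⟩
  · omega
  · rw [hP, x1Pt_eq_gadgetPt U 0, y1Pt_eq_gadgetPt U 0, dist_gadgetPt_zero_gadgetPt_zero]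
    exact Real.sqrt_le_sqrt (by norm_num)
  · omega
  · rw [hP, sPt_eq_gadgetPt U 0, y1Pt_eq_gadgetPt U 0, dist_gadgetPt_zero_gadgetPt_zero]
    exact Real.sqrt_le_sqrt (by norm_num)
  · rw [hP, bPt_eq_gadgetPt, y1Pt_eq_gadgetPt U (t j),
      dist_gadgetPt_gadgetPt (ht j hj).1 (ht j hj).2]
    exact Real.sqrt_le_sqrt (by norm_num)

lemma dist_Pseq_y2Pt_le (ht : ∀ j < m, 1 ≤ t j ∧ t j ≤ U) {p : ℕ} (hp₁ : 2 ≤ p)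
    (hp₂ : p ≤ 2 * m + 3) : dist (Pseq U m t p) (y2Pt U) ≤ √2 := by
  rcases Pseq_cases U t (by omega : p ≤ 2 * m + 4) with
    ⟨_, -⟩ | ⟨_, -⟩ | ⟨-, hP⟩ | ⟨-, hP⟩ | ⟨j, hj, -, hP⟩
  · omega
  · omega
  · rw [hP, x2Pt_eq_gadgetPt U 0, y2Pt_eq_gadgetPt U 0, dist_gadgetPt_zero_gadgetPt_zero]
    exact Real.sqrt_le_sqrt (by norm_num)
  · rw [hP, sPt_eq_gadgetPt U 0, y2Pt_eq_gadgetPt U 0, dist_gadgetPt_zero_gadgetPt_zero]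
    exact Real.sqrt_le_sqrt (by norm_num)
  · rw [hP, bPt_eq_gadgetPt, y2Pt_eq_gadgetPt U (t j),
      dist_gadgetPt_gadgetPt (ht j hj).1 (ht j hj).2]
    exact Real.sqrt_le_sqrt (by norm_num)

lemma sqrt_three_le_dist_x1Pt_Qseq (hs : ∀ i < k, 1 ≤ s i ∧ s i ≤ U) {q : ℕ} (hq : q < 3 * k)
    (hq₀ : q % 3 ≠ 0) : √3 ≤ dist (x1Pt U) (Qseq U k s q) := by
  obtain ⟨hs₁, hsU⟩ := hs (q / 3) (by omega)
  rcases Qseq_cases U k s q with ⟨_, -⟩ | ⟨-, hQ⟩ | ⟨-, hQ⟩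
  · omega
  · rw [hQ, x1Pt_eq_gadgetPt U (s (q / 3)), aPt_eq_gadgetPt, dist_gadgetPt_gadgetPt hs₁ hsU]
    exact Real.sqrt_le_sqrt (by norm_num)
  · rw [hQ, x1Pt_eq_gadgetPt U 0, y2Pt_eq_gadgetPt U 0, dist_gadgetPt_zero_gadgetPt_zero]
    exact Real.sqrt_le_sqrt (by norm_num)

lemma sqrt_three_le_dist_x2Pt_Qseq (hs : ∀ i < k, 1 ≤ s i ∧ s i ≤ U) {q : ℕ} (hq : q < 3 * k)
    (hq₂ : q % 3 ≠ 2) : √3 ≤ dist (x2Pt U) (Qseq U k s q) := by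
  obtain ⟨hs₁, hsU⟩ := hs (q / 3) (by omega)
  rcases Qseq_cases U k s q with ⟨-, hQ⟩ | ⟨-, hQ⟩ | ⟨_, -⟩
  · rw [hQ, x2Pt_eq_gadgetPt U 0, y1Pt_eq_gadgetPt U 0, dist_gadgetPt_zero_gadgetPt_zero]
    exact Real.sqrt_le_sqrt (by norm_num)
  · rw [hQ, x2Pt_eq_gadgetPt U (s (q / 3)), aPt_eq_gadgetPt, dist_gadgetPt_gadgetPt hs₁ hsU]
    exact Real.sqrt_le_sqrt (by norm_num)
  · omega

lemma sqrt_three_le_dist_Pseq_aPt (ht : ∀ j < m, 1 ≤ t j ∧ t j ≤ U) {v : ℕ} (hv₁ : 1 ≤ v)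
    (hvU : v ≤ U) (hvt : ∀ j < m, t j ≠ v) {p : ℕ} (hp₁ : 1 ≤ p) (hp₂ : p ≤ 2 * m + 3) :
    √3 ≤ dist (Pseq U m t p) (aPt U v) := by
  rw [aPt_eq_gadgetPt]
  rcases Pseq_cases U t (by omega : p ≤ 2 * m + 4) with
    ⟨_, -⟩ | ⟨-, hP⟩ | ⟨-, hP⟩ | ⟨-, hP⟩ | ⟨j, hj, -, hP⟩
  · omega
  · rw [hP, x1Pt_eq_gadgetPt U v, dist_gadgetPt_gadgetPt hv₁ hvU]
    exact Real.sqrt_le_sqrt (by norm_num)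
  · rw [hP, x2Pt_eq_gadgetPt U v, dist_gadgetPt_gadgetPt hv₁ hvU]
    exact Real.sqrt_le_sqrt (by norm_num)
  · rw [hP, sPt_eq_gadgetPt U v, dist_gadgetPt_gadgetPt hv₁ hvU]
    exact Real.sqrt_le_sqrt (by norm_num)
  · rw [hP, bPt_eq_gadgetPt,
      dist_gadgetPt_gadgetPt_of_ne (ht j hj).1 (ht j hj).2 hv₁ hvU (hvt j hj)]
    exact Real.sqrt_le_sqrt (by norm_num)

end Sequences

def matchingPath (m i j n : ℕ) : ℕ × ℕ :=
  if n ≤ 3 * i then (0, n)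
  else if n ≤ 3 * i + 2 * j + 2 then (n - 3 * i, 3 * i)
  else if n = 3 * i + 2 * j + 3 then (2 * j + 3, 3 * i + 1)
  else if n ≤ 3 * i + 2 * m + 4 then (n - 3 * i - 1, 3 * i + 2)
  else (2 * m + 4, n - 2 * m - 3)

def matchingTraversal (m k i j : ℕ) : List (ℕ × ℕ) :=
  (List.range (2 * m + 3 * k + 3)).map (matchingPath m i j)

section matchingTraversal

variable {m k i j : ℕ}

lemma isTraversal_matchingTraversal (hi : i < k) (hj : j < m) :
    IsTraversal (2 * m + 5) (3 * k) (matchingTraversal m k i j) := by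
  refine ⟨?_, ?_, ?_⟩
  · rw [matchingTraversal, List.head?_map, List.head?_range, if_neg (by omega)]
    simp [matchingPath]
  · rw [matchingTraversal, List.getLast?_map, List.getLast?_eq_getElem?, List.length_range,
      List.getElem?_range (by omega)]
    simp only [Option.map_some, matchingPath, Option.some.injEq]
    split_ifs <;> simp only [Prod.ext_iff] <;> omega
  · refine (List.isChain_map _).2 ((List.isChain_range_succ _ _).2 fun n _ => ?_)
    simp only [matchingPath, TravStep]
    split_ifs <;> simp only [Prod.ext_iff, ne_eq] <;> omega

lemma mem_matchingTraversal (hi : i < k) {p q : ℕ} (h : (p, q) ∈ matchingTraversal m k i j) :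
    ((p = 0 ∨ p = 2 * m + 4) ∧ q < 3 * k) ∨ (q = 3 * i ∧ 1 ≤ p ∧ p ≤ 2 * j + 2) ∨
      (q = 3 * i + 2 ∧ 2 * j + 3 ≤ p ∧ p ≤ 2 * m + 3) ∨ (p = 2 * j + 3 ∧ q = 3 * i + 1) := by
  obtain ⟨n, hn, hpq⟩ := List.mem_map.1 h
  rw [List.mem_range] at hn
  unfold matchingPath at hpq
  split_ifs at hpq <;> simp only [Prod.mk.injEq] at hpq <;> omega

end matchingTraversal

section Reduction

variable {U k m : ℕ} {s t : ℕ → ℕ}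

lemma dist_le_sqrt_two_of_mem_matchingTraversal (hs : ∀ i < k, 1 ≤ s i ∧ s i ≤ U)
    (ht : ∀ j < m, 1 ≤ t j ∧ t j ≤ U) {i j : ℕ} (hi : i < k) (hj : j < m) (hij : s i = t j)
    {p q : ℕ} (h : (p, q) ∈ matchingTraversal m k i j) :
    dist (Pseq U m t p) (Qseq U k s q) ≤ √2 := by
  rcases mem_matchingTraversal hi h with
    ⟨hp, hq⟩ | ⟨rfl, hp₁, hp₂⟩ | ⟨rfl, hp₁, hp₂⟩ | ⟨rfl, rfl⟩
  · have hP : Pseq U m t p = wPt U := by rcases hp with rfl | rfl <;> simp [Pseq]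
    rw [hP, dist_wPt_Qseq hs hq]
    exact Real.one_lt_sqrt_two.le
  · have hQ : Qseq U k s (3 * i) = y1Pt U := by simp [Qseq]
    rw [hQ]
    exact dist_Pseq_y1Pt_le ht hp₁ (by omega)
  · have hQ : Qseq U k s (3 * i + 2) = y2Pt U := by simp [Qseq]
    rw [hQ]
    exact dist_Pseq_y2Pt_le ht (by omega) hp₂
  · have hP : Pseq U m t (2 * j + 3) = bPt U (t j) := by
      simp [Pseq, hj.ne, show 2 * j + 1 ≠ 2 * m by omega, show 2 * j ≠ 2 * m + 1 by omega]
    have hQ : Qseq U k s (3 * i + 1) = aPt U (s i) := by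
      simp [Qseq, show (3 * i + 1) / 3 = i by omega]
    rw [hP, hQ, hij, bPt_eq_gadgetPt, aPt_eq_gadgetPt,
      dist_gadgetPt_gadgetPt (ht j hj).1 (ht j hj).2]
    norm_num

lemma exists_sqrt_three_le_dist_of_isTraversal (hk : 1 ≤ k) (hs : ∀ i < k, 1 ≤ s i ∧ s i ≤ U)
    (ht : ∀ j < m, 1 ≤ t j ∧ t j ≤ U) (hdisj : ¬ ∃ i < k, ∃ j < m, s i = t j)
    {T : List (ℕ × ℕ)} (hT : IsTraversal (2 * m + 5) (3 * k) T) :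
    ∃ pq ∈ T, √3 ≤ dist (Pseq U m t pq.1) (Qseq U k s pq.2) := by
  have hx₁ : Pseq U m t 1 = x1Pt U := by simp [Pseq]
  have hx₂ : Pseq U m t (2 * m + 3) = x2Pt U := by simp [Pseq]
  by_contra! hnear
  obtain ⟨q₁, hq₁k, h₁⟩ := hT.exists_mem_fst_eq (p := 1) (by omega)
  obtain ⟨q₂, hq₂k, h₂⟩ := hT.exists_mem_fst_eq (p := 2 * m + 3) (by omega)
  have hq₁ : q₁ % 3 = 0 := by
    by_contra h
    exact (hnear _ h₁).not_ge (hx₁ ▸ sqrt_three_le_dist_x1Pt_Qseq hs (by omega) h)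
  have hq₂ : q₂ % 3 = 2 := by
    by_contra h
    exact (hnear _ h₂).not_ge (hx₂ ▸ sqrt_three_le_dist_x2Pt_Qseq hs (by omega) h)
  have h₁₂ : ((1, q₁) : ℕ × ℕ) ≤ (2 * m + 3, q₂) :=
    (le_total_of_mem_of_isChain (fun _ _ => TravStep.le) hT.2.2 h₁ h₂).resolve_right
      fun h => by have := (Prod.mk_le_mk.1 h).1; omega
  have hq₁₂ := (Prod.mk_le_mk.1 h₁₂).2
  obtain ⟨⟨p, q⟩, h, ⟨hlo, hhi⟩, rfl : q = q₁ + 1⟩ :=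
    exists_mem_Icc_apply_eq_of_isChain (f := Prod.snd) (fun _ _ h => ⟨h.le, h.2.2.2.1⟩) hT.2.2
      h₁ h₂ h₁₂ (v := q₁ + 1) (by simp) (by simp; omega)
  have hi : (q₁ + 1) / 3 < k := by omega
  have hQ : Qseq U k s (q₁ + 1) = aPt U (s ((q₁ + 1) / 3)) := by
    simp [Qseq, show (q₁ + 1) % 3 = 1 by omega]
  refine (hnear _ h).not_ge ?_
  rw [hQ]
  exact sqrt_three_le_dist_Pseq_aPt ht (hs _ hi).1 (hs _ hi).2
    (fun j hj hji => hdisj ⟨_, hi, j, hj, hji.symm⟩) (Prod.mk_le_mk.1 hlo).1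
    (Prod.mk_le_mk.1 hhi).1

end Reduction

theorem high_dim_reduction_general (U k m : ℕ) (hk : 1 ≤ k) (hm : 1 ≤ m)
    (s t : ℕ → ℕ)
    (hs : ∀ i < k, 1 ≤ s i ∧ s i ≤ U) (ht : ∀ j < m, 1 ≤ t j ∧ t j ≤ U) :
    ((∃ i < k, ∃ j < m, s i = t j) →
      ddF (2 * m + 5) (3 * k) (Pseq U m t) (Qseq U k s) ≤ Real.sqrt 2) ∧
    ((¬ ∃ i < k, ∃ j < m, s i = t j) →
      Real.sqrt 3 ≤ ddF (2 * m + 5) (3 * k) (Pseq U m t) (Qseq U k s)) := by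
  constructor
  · rintro ⟨i, hi, j, hj, hij⟩
    exact ddF_le_of_isTraversal (isTraversal_matchingTraversal hi hj) fun _ h =>
      dist_le_sqrt_two_of_mem_matchingTraversal hs ht hi hj hij h
  · intro hdisj
    exact le_ddF_of_forall_isTraversal (isTraversal_matchingTraversal (i := 0) (j := 0) hk hm)
      fun _ hT => exists_sqrt_three_le_dist_of_isTraversal hk hs ht hdisj hT

/-- the high-dimensional reduction gadgets satisfy
`d_dF(P,Q) ≤ √2` if `S ∩ T ≠ ∅` and `d_dF(P,Q) ≥ √3` if `S ∩ T = ∅`. -/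
theorem high_dim_reduction (U k m : ℕ) (hk : 1 ≤ k) (hm : 1 ≤ m)
    (s t : ℕ → ℕ)
    (hs : ∀ i < k, 1 ≤ s i ∧ s i ≤ U) (ht : ∀ j < m, 1 ≤ t j ∧ t j ≤ U)
    (hsinj : ∀ i < k, ∀ i' < k, s i = s i' → i = i')
    (htinj : ∀ j < m, ∀ j' < m, t j = t j' → j = j') :
    ((∃ i < k, ∃ j < m, s i = t j) →
      ddF (2 * m + 5) (3 * k) (Pseq U m t) (Qseq U k s) ≤ Real.sqrt 2) ∧
    ((¬ ∃ i < k, ∃ j < m, s i = t j) →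
      Real.sqrt 3 ≤ ddF (2 * m + 5) (3 * k) (Pseq U m t) (Qseq U k s)) :=
  high_dim_reduction_general U k m hk hm s t hs ht
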